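/- Let K be a field of characteristic 0, let A be a K-algebra, and let a, b ∈ A satisfy a² = b² = 0. If the element a·b is transcendental over K, then the family of elements {(ab)^i : i ≥ 0} ∪ {(ab)^i a : i ≥ 0} ∪ {b(ab)^i : i ≥ 0} ∪ {b(ab)^i a : i ≥ 0} is linearly independent over K (equivalently, the K-subalgebra K[a,b] is isomorphic to the relatively free algebra K⟨x,y⟩/(x², y²) via x ↦ a, y ↦ b). -/

import Mathlib

/-!
Write an element of the span as `p(ab) + q(ab) a + b r(ab) + b s(ab) a` with polynomials
`p, q, r, s`. Since `a² = b² = 0`, the sandwich `b · _ · a` kills everything except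
`b p(ab) a`, and `a (b p(ab) a) b = (ab) p(ab) (ab)`, so transcendence of `ab` forces `p = 0`.
Then `b · _`, `_ · a` and finally the element itself isolate `b q(ab) a`, `b r(ab) a` and
`b s(ab) a` in turn. Hence the evaluation map `K[X]⁴ → A` is injective, and it sends the
monomial basis of `K[X]⁴` onto the family.
-/

open Polynomial

theorem Polynomial.eq_zero_of_X_mul_mul_X_eq_zero {R : Type*} [Semiring R] {p : R[X]}
    (h : X * p * X = 0) : p = 0 :=
  isRegular_X.right (isRegular_X.left (by simpa [mul_assoc] using h) : p * X = 0 * X)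

section

variable {R A : Type*} [CommRing R] [Ring A] [Algebra R A]

theorem eq_zero_of_mul_aeval_mul_eq_zero {a b : A} (htr : Transcendental R (a * b))
    {p : R[X]} (h : b * aeval (a * b) p * a = 0) : p = 0 := by
  refine eq_zero_of_X_mul_mul_X_eq_zero (transcendental_iff.mp htr _ ?_)
  calc aeval (a * b) (X * p * X) = a * (b * aeval (a * b) p * a) * b := by
        simp only [map_mul, aeval_X, mul_assoc]
    _ = 0 := by rw [h, mul_zero, zero_mul]

/-- Evaluation at `x ↦ a`, `y ↦ b` of the normal form `p(xy) + q(xy) x + y r(xy) + y s(xy) x`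
of `K⟨x, y⟩ / (x², y²)`. -/
noncomputable def normalFormEval (a b : A) : R[X] × R[X] × R[X] × R[X] →ₗ[R] A :=
  let ev := (aeval (R := R) (a * b)).toLinearMap
  ev.coprod ((LinearMap.mulRight R a ∘ₗ ev).coprod ((LinearMap.mulLeft R b ∘ₗ ev).coprod
    (LinearMap.mulLeft R b ∘ₗ LinearMap.mulRight R a ∘ₗ ev)))

theorem normalFormEval_apply (a b : A) (p q r s : R[X]) :
    normalFormEval a b (p, q, r, s) =
      aeval (a * b) p + aeval (a * b) q * a + b * aeval (a * b) r + b * aeval (a * b) s * a := by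
  simp [normalFormEval, add_assoc, mul_assoc]

theorem normalFormEval_injective {a b : A} (ha : a ^ 2 = 0) (hb : b ^ 2 = 0)
    (htr : Transcendental R (a * b)) : Function.Injective (normalFormEval (R := R) a b) := by
  rw [pow_two] at ha hb
  have hbb (z : A) : b * (b * z) = 0 := by rw [← mul_assoc, hb, zero_mul]
  rw [injective_iff_map_eq_zero]
  rintro ⟨p, q, r, s⟩ hx
  rw [normalFormEval_apply] at hx
  have hp : p = 0 := eq_zero_of_mul_aeval_mul_eq_zero htr <| by
    simpa [mul_add, add_mul, mul_assoc, ha, hbb] using congrArg (b * · * a) hx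
  subst hp
  have hq : q = 0 := eq_zero_of_mul_aeval_mul_eq_zero htr <| by
    simpa [mul_add, mul_assoc, hbb] using congrArg (b * ·) hx
  subst hq
  have hr : r = 0 := eq_zero_of_mul_aeval_mul_eq_zero htr <| by
    simpa [mul_add, add_mul, mul_assoc, ha] using congrArg (· * a) hx
  subst hr
  have hs : s = 0 := eq_zero_of_mul_aeval_mul_eq_zero htr <| by simpa using hx
  simp [hs]

end

theorem linearIndependent_of_transcendental (K A : Type*) [Field K]
    [Ring A] [Algebra K A] (a b : A) (ha : a ^ 2 = 0) (hb : b ^ 2 = 0)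
    (htr : Transcendental K (a * b)) :
    LinearIndependent K (fun p : ℕ ⊕ ℕ ⊕ ℕ ⊕ ℕ =>
      match p with
      | .inl i => (a * b) ^ i
      | .inr (.inl i) => (a * b) ^ i * a
      | .inr (.inr (.inl i)) => b * (a * b) ^ i
      | .inr (.inr (.inr i)) => b * (a * b) ^ i * a) := by
  let basis := (basisMonomials K).prod ((basisMonomials K).prod
    ((basisMonomials K).prod (basisMonomials K)))
  have hindep : LinearIndependent K (normalFormEval a b ∘ basis) :=
    basis.linearIndependent.map' _ (LinearMap.ker_eq_bot.mpr (normalFormEval_injective ha hb htr))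
  convert hindep using 2 with p
  rcases p with i | i | i | i <;>
    simp [basis, ← Prod.mk_zero_zero, normalFormEval_apply, mul_assoc]
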